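/- Let K be a simplicial complex on Fin n, σ a permutation of Fin n, and d ≥ 1. Then the boundary maps of K and of the image complex σ(K) are intertwined by the signed relabelling maps: T^{d−1}_σ ∘ B_d^K = B_d^{σ(K)} ∘ T^d_σ as linear maps C_d(K) → C_{d−1}(σ(K)). -/

import Mathlib

open Finset

/-- A simplicial complex on the vertex set `Fin n`: a set of nonempty finsets closed under
taking nonempty subsets. -/
def IsSimplicialCx {n : ℕ} (𝒦 : Set (Finset (Fin n))) : Prop :=
  (∀ s ∈ 𝒦, s.Nonempty) ∧ ∀ s ∈ 𝒦, ∀ t ⊆ s, t.Nonempty → t ∈ 𝒦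

/-- `X_d(𝒦)`: the `d`-simplices of `𝒦`, i.e. the members of `𝒦` of cardinality `d + 1`. -/
abbrev Cell (n d : ℕ) (𝒦 : Set (Finset (Fin n))) : Type :=
  {s : Finset (Fin n) // s ∈ 𝒦 ∧ s.card = d + 1}

noncomputable instance (n d : ℕ) (𝒦 : Set (Finset (Fin n))) : Fintype (Cell n d 𝒦) :=
  Fintype.ofFinite _

/-- The incidence sign `I_e^t`: equals `(-1)^k` if `e = t.erase i_k` where `i_k` is the
`(k+1)`-st smallest element of `t`, and `0` otherwise. -/
noncomputable def isign {n : ℕ} (t e : Finset (Fin n)) : ℤ :=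
  ∑ k : Fin t.card, if e = t.erase (t.orderIsoOfFin rfl k : Fin n) then (-1) ^ (k : ℕ) else 0

/-- The boundary map `B_{d+1} : C_{d+1}(𝒦) → C_d(𝒦)`, `(B x)_e = Σ_t I_e^t x_t`. -/
noncomputable def bMap {n : ℕ} (𝒦 : Set (Finset (Fin n))) (d : ℕ)
    (x : Cell n (d + 1) 𝒦 → ℝ) : Cell n d 𝒦 → ℝ :=
  fun e => ∑ t : Cell n (d + 1) 𝒦, (isign t.1 e.1 : ℝ) * x t

/-- The transpose (adjoint) boundary map `B_{d+1}ᵀ : C_d(𝒦) → C_{d+1}(𝒦)`,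
`(Bᵀ y)_t = Σ_e I_e^t y_e`. -/
noncomputable def bMapT {n : ℕ} (𝒦 : Set (Finset (Fin n))) (d : ℕ)
    (y : Cell n d 𝒦 → ℝ) : Cell n (d + 1) 𝒦 → ℝ :=
  fun t => ∑ e : Cell n d 𝒦, (isign t.1 e.1 : ℝ) * y e

/-- The permutation of `Fin A.card` induced by a permutation `σ` of `Fin n` on a finset `A`:
`k ↦ e_{A.image σ}⁻¹ (σ (e_A k))`, where `e_A` enumerates `A` in increasing order. -/
noncomputable def relPerm {n : ℕ} (σ : Equiv.Perm (Fin n)) (A : Finset (Fin n)) :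
    Equiv.Perm (Fin A.card) :=
  ((A.orderIsoOfFin rfl).toEquiv.trans
      ((σ : Fin n ≃ Fin n).subtypeEquiv (p := (· ∈ A)) (q := (· ∈ A.image ⇑σ))
        (fun a => ⟨fun ha => Finset.mem_image_of_mem σ ha,
          fun h => by
            obtain ⟨a', ha', h'⟩ := Finset.mem_image.mp h
            rwa [← σ.injective h']⟩))).trans
    ((A.image ⇑σ).orderIsoOfFin
      (Finset.card_image_of_injective A σ.injective)).toEquiv.symm

/-- `sgn(A, σ) ∈ {1, -1}`: the sign of the permutation by which `σ` rearranges the elements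
of `A`. -/
noncomputable def sgnA {n : ℕ} (σ : Equiv.Perm (Fin n)) (A : Finset (Fin n)) : ℤ :=
  ((Equiv.Perm.sign (relPerm σ A) : ℤˣ) : ℤ)

/-- The signed relabelling map `T^d_σ : C_d(𝒦) → C_d(σ(𝒦))`, the linear map determined by
`(T^d_σ x)_{A.image σ} = sgn(A, σ) · x_A` for all `A ∈ X_d(𝒦)`. -/
noncomputable def Tmap {n : ℕ} (σ : Equiv.Perm (Fin n)) (𝒦 : Set (Finset (Fin n))) (d : ℕ)
    (x : Cell n d 𝒦 → ℝ) : Cell n d (Finset.image ⇑σ '' 𝒦) → ℝ :=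
  fun s => ∑ A : Cell n d 𝒦, if s.1 = A.1.image ⇑σ then (sgnA σ A.1 : ℝ) * x A else 0

/-!
If `t` has `d + 2` vertices and `e = t.erase (i_k)` is its `k`-th face, then relabelling by `σ`
sends `e` to the `k'`-th face of `σ t`, where `k' = π k` for the permutation `π` by which `σ`
reorders `t`. The permutation by which `σ` reorders `e` is `π` with row `k` and column `π k`
deleted, so its sign is `(-1)^(k + π k) sgn π`. Hence `sgn(e, σ) I_e^t = I_{σ e}^{σ t} sgn(t, σ)`
for all `e`, which is the intertwining identity entrywise after reindexing the boundary sum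
along the bijection `t ↦ σ t` between the simplices of `𝒦` and those of `σ(𝒦)`.
-/

open Equiv Equiv.Perm Finset

theorem Equiv.Perm.sign_mul_neg_one_pow_of_apply_succAbove {m : ℕ} (π : Perm (Fin (m + 1)))
    (k : Fin (m + 1)) (τ : Perm (Fin m)) (h : ∀ j, π (k.succAbove j) = (π k).succAbove (τ j)) :
    sign τ * (-1) ^ (k : ℕ) = (-1) ^ (π k : ℕ) * sign π := by
  -- the cycles `(0 1 … k)` and `(0 1 … π k)` move the pair `k ↦ π k` to `0 ↦ 0`
  have hconj : (π k).cycleRange * π * k.cycleRange⁻¹ = decomposeFin.symm (0, τ) := by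
    ext j
    refine Fin.cases ?_ (fun i => ?_) j
    · simp [mul_apply, inv_def]
    · simp [mul_apply, inv_def, h]
  have hsign := congrArg sign hconj
  simp only [map_mul, map_inv, Fin.sign_cycleRange, decomposeFin.symm_sign, if_true,
    one_mul] at hsign
  rw [← hsign, inv_mul_cancel_right]

theorem Finset.orderEmbOfFin_erase_apply {α : Type*} [LinearOrder α] {t u : Finset α} {m : ℕ}
    (h : t.card = m + 1) (k : Fin (m + 1)) (hu : u = t.erase (t.orderEmbOfFin h k))
    (h' : u.card = m) (j : Fin m) :
    u.orderEmbOfFin h' j = t.orderEmbOfFin h (k.succAbove j) := by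
  subst hu
  refine (congrFun (orderEmbOfFin_unique h' (fun j => mem_erase.2 ⟨?_, orderEmbOfFin_mem t h _⟩)
    ((t.orderEmbOfFin h).strictMono.comp (Fin.strictMono_succAbove k))) j).symm
  exact fun hEq => Fin.succAbove_ne k j ((t.orderEmbOfFin h).injective hEq)

section Relabelling

variable {n : ℕ} (σ : Perm (Fin n))

/-- Transporting `relPerm σ A` along `A.card = m` lets the reorderings of `t` and of its faces
live on `Fin (m + 1)` and `Fin m` without casts. -/
noncomputable def relPermOfCard (A : Finset (Fin n)) {m : ℕ} (h : A.card = m) : Perm (Fin m) :=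
  (finCongr h).permCongr (relPerm σ A)

theorem sgnA_eq_sign_relPermOfCard (A : Finset (Fin n)) {m : ℕ} (h : A.card = m) :
    sgnA σ A = sign (relPermOfCard σ A h) := by
  rw [sgnA, relPermOfCard, sign_permCongr]

theorem orderEmbOfFin_image_relPermOfCard (A : Finset (Fin n)) {m : ℕ} (h : A.card = m)
    (h' : (A.image σ).card = m) (j : Fin m) :
    (A.image σ).orderEmbOfFin h' (relPermOfCard σ A h j) = σ (A.orderEmbOfFin h j) := by
  subst h
  rw [← coe_orderIsoOfFin_apply, ← coe_orderIsoOfFin_apply]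
  simp [relPermOfCard, relPerm]

theorem card_image_perm (A : Finset (Fin n)) : (A.image σ).card = A.card :=
  card_image_of_injective A σ.injective

theorem relPermOfCard_succAbove (t : Finset (Fin n)) {m : ℕ} (h : t.card = m + 1)
    (k : Fin (m + 1)) (h' : (t.erase (t.orderEmbOfFin h k)).card = m) (j : Fin m) :
    relPermOfCard σ t h (k.succAbove j) =
      (relPermOfCard σ t h k).succAbove (relPermOfCard σ _ h' j) := by
  have himage : (t.image σ).card = m + 1 := (card_image_perm σ t).trans h
  have hface : (t.erase (t.orderEmbOfFin h k)).image σ =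
      (t.image σ).erase ((t.image σ).orderEmbOfFin himage (relPermOfCard σ t h k)) := by
    rw [orderEmbOfFin_image_relPermOfCard, image_erase σ.injective]
  have hface' : ((t.erase (t.orderEmbOfFin h k)).image σ).card = m :=
    (card_image_perm σ _).trans h'
  apply ((t.image σ).orderEmbOfFin himage).injective
  rw [orderEmbOfFin_image_relPermOfCard, ← orderEmbOfFin_erase_apply h k rfl h',
    ← orderEmbOfFin_image_relPermOfCard σ _ h' hface', orderEmbOfFin_erase_apply himage _ hface]

theorem sgnA_erase_mul_neg_one_pow (t : Finset (Fin n)) {m : ℕ} (h : t.card = m + 1)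
    (k : Fin (m + 1)) :
    sgnA σ (t.erase (t.orderEmbOfFin h k)) * (-1) ^ (k : ℕ) =
      (-1) ^ (relPermOfCard σ t h k : ℕ) * sgnA σ t := by
  have h' : (t.erase (t.orderEmbOfFin h k)).card = m := by
    rw [card_erase_of_mem (orderEmbOfFin_mem t h k), h, Nat.add_sub_cancel]
  rw [sgnA_eq_sign_relPermOfCard σ _ h', sgnA_eq_sign_relPermOfCard σ t h]
  have hsign := congrArg ((↑) : ℤˣ → ℤ) (sign_mul_neg_one_pow_of_apply_succAbove _ k _
    (relPermOfCard_succAbove σ t h k h'))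
  push_cast at hsign
  exact hsign

end Relabelling

section IncidenceSign

variable {n : ℕ}

theorem isign_eq_sum (t : Finset (Fin n)) {m : ℕ} (h : t.card = m) (e : Finset (Fin n)) :
    isign t e = ∑ k : Fin m, if e = t.erase (t.orderEmbOfFin h k) then (-1) ^ (k : ℕ) else 0 := by
  subst h
  rfl

theorem isign_erase_orderEmbOfFin (t : Finset (Fin n)) {m : ℕ} (h : t.card = m) (k : Fin m) :
    isign t (t.erase (t.orderEmbOfFin h k)) = (-1) ^ (k : ℕ) := by
  rw [isign_eq_sum t h, sum_eq_single_of_mem k (mem_univ k), if_pos rfl]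
  intro j _ hjk
  refine if_neg fun hEq => hjk ((t.orderEmbOfFin h).injective ?_)
  exact ((erase_inj t (orderEmbOfFin_mem t h k)).1 hEq).symm

theorem isign_eq_zero (t : Finset (Fin n)) {m : ℕ} (h : t.card = m) (e : Finset (Fin n))
    (he : ∀ k, e ≠ t.erase (t.orderEmbOfFin h k)) : isign t e = 0 := by
  rw [isign_eq_sum t h]
  exact sum_eq_zero fun k _ => if_neg (he k)

theorem sgnA_mul_isign (σ : Perm (Fin n)) (t e : Finset (Fin n)) {m : ℕ} (h : t.card = m + 1) :
    sgnA σ e * isign t e = isign (t.image σ) (e.image σ) * sgnA σ t := by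
  have himage : (t.image σ).card = m + 1 := (card_image_perm σ t).trans h
  by_cases hface : ∃ k, e = t.erase (t.orderEmbOfFin h k)
  · obtain ⟨k, rfl⟩ := hface
    rw [image_erase σ.injective, ← orderEmbOfFin_image_relPermOfCard σ t h himage,
      isign_erase_orderEmbOfFin, isign_erase_orderEmbOfFin, sgnA_erase_mul_neg_one_pow]
  · push Not at hface
    rw [isign_eq_zero t h e hface, isign_eq_zero _ himage, mul_zero, zero_mul]
    intro k hk
    obtain ⟨j, rfl⟩ := (relPermOfCard σ t h).surjective k
    rw [orderEmbOfFin_image_relPermOfCard, ← image_erase σ.injective] at hk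
    exact hface j (image_injective σ.injective hk)

end IncidenceSign

section Cell

variable {n d : ℕ} {𝒦 : Set (Finset (Fin n))} (σ : Perm (Fin n))

def Cell.image (A : Cell n d 𝒦) : Cell n d (Finset.image σ '' 𝒦) :=
  ⟨A.1.image σ, Set.mem_image_of_mem _ A.2.1, (card_image_perm σ A.1).trans A.2.2⟩

theorem Cell.coe_image (A : Cell n d 𝒦) : (A.image σ).1 = A.1.image σ :=
  rfl

theorem Cell.image_bijective : Function.Bijective (Cell.image (d := d) (𝒦 := 𝒦) σ) := by
  refine ⟨fun A B hAB => Subtype.ext (image_injective σ.injective (congrArg Subtype.val hAB)),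
    fun s => ?_⟩
  obtain ⟨A, hA, hAs⟩ := s.2.1
  refine ⟨⟨A, hA, ?_⟩, Subtype.ext hAs⟩
  rw [← card_image_perm σ A, hAs, s.2.2]

theorem Tmap_cellImage (x : Cell n d 𝒦 → ℝ) (A : Cell n d 𝒦) :
    Tmap σ 𝒦 d x (A.image σ) = sgnA σ A.1 * x A := by
  rw [Tmap, sum_eq_single_of_mem A (mem_univ A)]
  · exact if_pos (Cell.coe_image σ A)
  intro B _ hBA
  exact if_neg fun hAB => hBA ((Cell.image_bijective σ).1 (Subtype.ext hAB)).symm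

end Cell

theorem Tmap_boundary_intertwine_general {n : ℕ} (𝒦 : Set (Finset (Fin n)))
    (σ : Equiv.Perm (Fin n)) (e : ℕ)
    (x : Cell n (e + 1) 𝒦 → ℝ) :
    Tmap σ 𝒦 e (bMap 𝒦 e x) = bMap (Finset.image ⇑σ '' 𝒦) e (Tmap σ 𝒦 (e + 1) x) := by
  funext s
  obtain ⟨A, rfl⟩ := (Cell.image_bijective σ).2 s
  rw [Tmap_cellImage, bMap, bMap, ← (Cell.image_bijective σ).sum_comp, mul_sum]
  refine sum_congr rfl fun t _ => ?_
  have hsign := congrArg ((↑) : ℤ → ℝ) (sgnA_mul_isign σ t.1 A.1 t.2.2)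
  push_cast at hsign
  rw [Tmap_cellImage, Cell.coe_image, Cell.coe_image]
  linear_combination x t * hsign

/-- **Intertwining of boundary maps under relabelling.**  For a simplicial complex `𝒦` on
`Fin n`, a permutation `σ` of the vertices, and any `d ≥ 1` (written `d = e + 1`):
`T^{d-1}_σ ∘ B_d^𝒦 = B_d^{σ(𝒦)} ∘ T^d_σ` as maps `C_d(𝒦) → C_{d-1}(σ(𝒦))`. -/
theorem Tmap_boundary_intertwine {n : ℕ} (𝒦 : Set (Finset (Fin n)))
    (hK : IsSimplicialCx 𝒦) (σ : Equiv.Perm (Fin n)) (e : ℕ)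
    (x : Cell n (e + 1) 𝒦 → ℝ) :
    Tmap σ 𝒦 e (bMap 𝒦 e x) = bMap (Finset.image ⇑σ '' 𝒦) e (Tmap σ 𝒦 (e + 1) x) :=
  Tmap_boundary_intertwine_general 𝒦 σ e x
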